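/- (Well-definedness of the algebraic homological filling function) Let G be a group and n ≥ 1. Let (F_*, ∂_*) and (P_*, δ_*) be two FP_{n+1}-resolutions of ℤ over ℤ[G], each equipped with chosen filling norms on its degree-n and degree-(n+1) modules, and let FV_{F_*}, FV_{P_*} : ℕ → ℕ∞ be the associated filling functions, FV_{F_*}(k) = sup{‖γ‖_{∂_{n+1}} : γ ∈ ker ∂_n, ‖γ‖_{F_n} ≤ k} and similarly for FV_{P_*}. Then FV_{F_*} ∼ FV_{P_*}, i.e. FV_{F_*} ⪯ FV_{P_*} and FV_{P_*} ⪯ FV_{F_*}. -/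

import Mathlib

/-- The ℓ1-norm on the based finitely generated free `ℤ[G]`-module `Fin r →₀ ℤ[G]`. -/
noncomputable def l1 {G : Type*} [Group G] {r : ℕ}
    (x : Fin r →₀ MonoidAlgebra ℤ G) : ℕ :=
  x.sum fun _ a => Finsupp.sum a.coeff fun _ z => z.natAbs

/-- The filling norm on `M` induced by a surjection `η` from a based finitely
generated free `ℤ[G]`-module: `‖m‖_η = min { ‖x‖₁ : η x = m }`. -/
noncomputable def fillNorm {G : Type*} [Group G] {r : ℕ}
    {M : Type*} [AddCommGroup M] [Module (MonoidAlgebra ℤ G) M]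
    (η : (Fin r →₀ MonoidAlgebra ℤ G) →ₗ[MonoidAlgebra ℤ G] M) (m : M) : ℕ :=
  sInf {n : ℕ | ∃ x, η x = m ∧ l1 x = n}

/-- Given a boundary map `d : A → B` (playing the role of `∂_{n+1}`) and a filling
norm on `A` induced by `η`, the filling norm `‖γ‖_{∂_{n+1}} = min {‖μ‖_A : d μ = γ}`. -/
noncomputable def bdryNorm {G : Type*} [Group G]
    {A B : Type*} [AddCommGroup A] [Module (MonoidAlgebra ℤ G) A]
    [AddCommGroup B] [Module (MonoidAlgebra ℤ G) B] {r : ℕ}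
    (d : A →ₗ[MonoidAlgebra ℤ G] B)
    (η : (Fin r →₀ MonoidAlgebra ℤ G) →ₗ[MonoidAlgebra ℤ G] A) (γ : B) : ℕ :=
  sInf {c : ℕ | ∃ μ, d μ = γ ∧ fillNorm η μ = c}

/-- The filling function associated to `P_{n+1} →^{d1} P_n →^{dn} P_{n-1}` and
filling norms induced by `ηn` (on `P_n`) and `η1` (on `P_{n+1}`):
`FV(k) = sup {‖γ‖_{∂_{n+1}} : γ ∈ ker ∂_n, ‖γ‖_{P_n} ≤ k}`. -/
noncomputable def FVfun {G : Type*} [Group G]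
    {A B Cc : Type*} [AddCommGroup A] [Module (MonoidAlgebra ℤ G) A]
    [AddCommGroup B] [Module (MonoidAlgebra ℤ G) B]
    [AddCommGroup Cc] [Module (MonoidAlgebra ℤ G) Cc] {r1 rn : ℕ}
    (d1 : A →ₗ[MonoidAlgebra ℤ G] B) (dn : B →ₗ[MonoidAlgebra ℤ G] Cc)
    (ηn : (Fin rn →₀ MonoidAlgebra ℤ G) →ₗ[MonoidAlgebra ℤ G] B)
    (η1 : (Fin r1 →₀ MonoidAlgebra ℤ G) →ₗ[MonoidAlgebra ℤ G] A)
    (k : ℕ) : ℕ∞ :=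
  sSup {c : ℕ∞ | ∃ γ ∈ LinearMap.ker dn,
    fillNorm ηn γ ≤ k ∧ c = (bdryNorm d1 η1 γ : ℕ∞)}

/-- `f ⪯ g` : there is `C > 0` with `f(k) ≤ C·g(C·k + C) + C·k + C` for all `k`. -/
def FPreceq (f g : ℕ → ℕ∞) : Prop :=
  ∃ C : ℕ, 0 < C ∧ ∀ k : ℕ,
    f k ≤ (C : ℕ∞) * g (C * k + C) + (C : ℕ∞) * (k : ℕ∞) + (C : ℕ∞)

/-- `ℤ` with the trivial `G`-action, as a `ℤ[G]`-module via the augmentation map. -/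
def TrivialZ (G : Type*) [Group G] : Type := ℤ

noncomputable instance (G : Type*) [Group G] : AddCommGroup (TrivialZ G) :=
  inferInstanceAs (AddCommGroup ℤ)

noncomputable instance (G : Type*) [Group G] : Module (MonoidAlgebra ℤ G) (TrivialZ G) :=
  Module.compHom ℤ ((MonoidAlgebra.lift ℤ ℤ G) 1).toRingHom

/-! By the comparison theorem the two truncated resolutions admit chain maps `f : F → P`,
`g : P → F` and a chain homotopy `h` from `id` to `g ∘ f`, built degree by degree from projectivity
and exactness. If `γ` is an `n`-cycle of `F` and `ν` fills the cycle `f γ` of `P`, then `g ν + h γ`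
fills `γ`. Every `ℤ[G]`-linear map is Lipschitz for filling norms (lift it to the based free
modules, where the `ℓ¹`-norm is `G`-invariant), so `‖g ν + h γ‖ ≤ C · FV_P(C‖γ‖) + C‖γ‖`. -/

local notation "ℤ[" G "]" => MonoidAlgebra ℤ G

theorem Finsupp.sum_add_le_of_subadditive {α M N : Type*} [AddCommMonoid M] [AddCommMonoid N]
    [PartialOrder N] [IsOrderedAddMonoid N] (φ : M → N) (h_zero : φ 0 = 0)
    (h_add : ∀ x y, φ (x + y) ≤ φ x + φ y) (f g : α →₀ M) :
    (f + g).sum (fun _ => φ) ≤ f.sum (fun _ => φ) + g.sum (fun _ => φ) := by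
  classical
  rw [Finsupp.sum_of_support_subset (f + g) Finsupp.support_add _ (fun _ _ => h_zero),
    Finsupp.sum_of_support_subset f Finset.subset_union_left _ (fun _ _ => h_zero),
    Finsupp.sum_of_support_subset g Finset.subset_union_right _ (fun _ _ => h_zero),
    ← Finset.sum_add_distrib]
  exact Finset.sum_le_sum fun a _ => h_add (f a) (g a)

section L1

variable {G : Type*} [Group G] {r : ℕ}

theorem l1_zero : l1 (0 : Fin r →₀ ℤ[G]) = 0 := Finsupp.sum_zero_index

theorem l1_add_le (x y : Fin r →₀ ℤ[G]) : l1 (x + y) ≤ l1 x + l1 y :=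
  Finsupp.sum_add_le_of_subadditive _ rfl
    (fun a b => Finsupp.sum_add_le_of_subadditive _ rfl Int.natAbs_add_le a.coeff b.coeff) x y

theorem l1_single_single (i : Fin r) (g : G) (z : ℤ) :
    l1 (Finsupp.single i (MonoidAlgebra.single g z)) = z.natAbs := by
  rw [l1, Finsupp.sum_single_index (by simp), MonoidAlgebra.coeff_single,
    Finsupp.sum_single_index rfl]

theorem sum_single_single (x : Fin r →₀ ℤ[G]) :
    (x.sum fun i a => a.coeff.sum fun g z => Finsupp.single i (MonoidAlgebra.single g z)) = x := by
  conv_rhs => rw [← Finsupp.sum_single x]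
  refine Finsupp.sum_congr fun i _ => ?_
  rw [← Finsupp.single_sum, MonoidAlgebra.sum_coeff_single]

theorem le_mul_l1_of_subadditive (N : (Fin r →₀ ℤ[G]) → ℕ) (h_zero : N 0 = 0)
    (h_add : ∀ x y, N (x + y) ≤ N x + N y) (K : ℕ)
    (hK : ∀ i g z, N (Finsupp.single i (MonoidAlgebra.single g z)) ≤ K * z.natAbs)
    (x : Fin r →₀ ℤ[G]) : N x ≤ K * l1 x := by
  conv_lhs => rw [← sum_single_single x]
  calc N (x.sum fun i a => a.coeff.sum fun g z => Finsupp.single i (MonoidAlgebra.single g z))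
      ≤ x.sum fun i a => N (a.coeff.sum fun g z => Finsupp.single i (MonoidAlgebra.single g z)) :=
        Finset.le_sum_of_subadditive N h_zero.le h_add _ _
    _ ≤ x.sum fun i a => a.coeff.sum fun g z => K * z.natAbs :=
        Finset.sum_le_sum fun i _ => (Finset.le_sum_of_subadditive N h_zero.le h_add _ _).trans
          (Finset.sum_le_sum fun g _ => hK _ _ _)
    _ = K * l1 x := by simp only [l1, Finsupp.mul_sum]

theorem l1_single_smul_le (g : G) (z : ℤ) (y : Fin r →₀ ℤ[G]) :
    l1 (MonoidAlgebra.single g z • y) ≤ z.natAbs * l1 y := by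
  refine le_mul_l1_of_subadditive (fun y => l1 (MonoidAlgebra.single g z • y)) ?_ ?_ _ ?_ y
  · simp only [smul_zero, l1_zero]
  · intro x y
    simpa only [smul_add] using l1_add_le _ _
  · intro i g' w
    simp only [Finsupp.smul_single, smul_eq_mul, MonoidAlgebra.single_mul_single, l1_single_single,
      Int.natAbs_mul, le_refl]

theorem exists_l1_map_le {s : ℕ} (ψ : (Fin r →₀ ℤ[G]) →ₗ[ℤ[G]] (Fin s →₀ ℤ[G])) :
    ∃ C : ℕ, ∀ x, l1 (ψ x) ≤ C * l1 x := by
  refine ⟨∑ i, l1 (ψ (Finsupp.single i 1)), le_mul_l1_of_subadditive _ (by simp [l1_zero])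
    (fun x y => by simpa only [map_add] using l1_add_le _ _) _ fun i g z => ?_⟩
  have hsingle : Finsupp.single i (MonoidAlgebra.single g z) =
      MonoidAlgebra.single g z • Finsupp.single i (1 : ℤ[G]) := by
    rw [Finsupp.smul_single, smul_eq_mul, mul_one]
  calc l1 (ψ (Finsupp.single i (MonoidAlgebra.single g z)))
      ≤ z.natAbs * l1 (ψ (Finsupp.single i 1)) := by
        rw [hsingle, map_smul]; exact l1_single_smul_le g z _
    _ ≤ z.natAbs * ∑ i, l1 (ψ (Finsupp.single i 1)) :=
        Nat.mul_le_mul_left _ (Finset.single_le_sum (f := fun i => l1 (ψ (Finsupp.single i 1)))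
          (fun _ _ => Nat.zero_le _) (Finset.mem_univ i))
    _ = _ := Nat.mul_comm _ _

end L1

section FillingNorms

variable {G : Type*} [Group G] {r s : ℕ}
  {M N : Type*} [AddCommGroup M] [Module ℤ[G] M] [AddCommGroup N] [Module ℤ[G] N]

theorem fillNorm_le_l1 (η : (Fin r →₀ ℤ[G]) →ₗ[ℤ[G]] M) {x : Fin r →₀ ℤ[G]} {a : M}
    (h : η x = a) : fillNorm η a ≤ l1 x :=
  Nat.sInf_le ⟨x, h, rfl⟩

theorem exists_l1_eq_fillNorm {η : (Fin r →₀ ℤ[G]) →ₗ[ℤ[G]] M} (hη : Function.Surjective η)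
    (a : M) : ∃ x, η x = a ∧ l1 x = fillNorm η a :=
  let ⟨x, hx⟩ := hη a
  Nat.sInf_mem (s := {n | ∃ x, η x = a ∧ l1 x = n}) ⟨l1 x, x, hx, rfl⟩

theorem fillNorm_add_le {η : (Fin r →₀ ℤ[G]) →ₗ[ℤ[G]] M} (hη : Function.Surjective η)
    (a b : M) : fillNorm η (a + b) ≤ fillNorm η a + fillNorm η b := by
  obtain ⟨x, rfl, hx⟩ := exists_l1_eq_fillNorm hη a
  obtain ⟨y, rfl, hy⟩ := exists_l1_eq_fillNorm hη b
  calc fillNorm η (η x + η y) ≤ l1 (x + y) := fillNorm_le_l1 η (map_add η x y)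
    _ ≤ l1 x + l1 y := l1_add_le x y
    _ = _ := by rw [hx, hy]

theorem exists_fillNorm_map_le {ηM : (Fin r →₀ ℤ[G]) →ₗ[ℤ[G]] M} (hM : Function.Surjective ηM)
    {ηN : (Fin s →₀ ℤ[G]) →ₗ[ℤ[G]] N} (hN : Function.Surjective ηN) (φ : M →ₗ[ℤ[G]] N) :
    ∃ C : ℕ, ∀ a, fillNorm ηN (φ a) ≤ C * fillNorm ηM a := by
  obtain ⟨ψ, hψ⟩ := Module.projective_lifting_property ηN (φ ∘ₗ ηM) hN
  obtain ⟨C, hC⟩ := exists_l1_map_le ψ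
  refine ⟨C, fun a => ?_⟩
  obtain ⟨x, rfl, hx⟩ := exists_l1_eq_fillNorm hM a
  calc fillNorm ηN (φ (ηM x)) ≤ l1 (ψ x) := fillNorm_le_l1 ηN congr($hψ x)
    _ ≤ C * l1 x := hC x
    _ = C * fillNorm ηM (ηM x) := by rw [hx]

variable {A B : Type*} [AddCommGroup A] [Module ℤ[G] A] [AddCommGroup B] [Module ℤ[G] B]

theorem bdryNorm_le_fillNorm (d : A →ₗ[ℤ[G]] B) (η : (Fin r →₀ ℤ[G]) →ₗ[ℤ[G]] A) {μ : A}
    {γ : B} (h : d μ = γ) : bdryNorm d η γ ≤ fillNorm η μ :=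
  Nat.sInf_le ⟨μ, h, rfl⟩

theorem exists_fillNorm_eq_bdryNorm (d : A →ₗ[ℤ[G]] B) (η : (Fin r →₀ ℤ[G]) →ₗ[ℤ[G]] A) {γ : B}
    (h : γ ∈ LinearMap.range d) : ∃ μ, d μ = γ ∧ fillNorm η μ = bdryNorm d η γ :=
  let ⟨μ, hμ⟩ := h
  Nat.sInf_mem (s := {c | ∃ μ, d μ = γ ∧ fillNorm η μ = c}) ⟨fillNorm η μ, μ, hμ, rfl⟩

variable {Cc : Type*} [AddCommGroup Cc] [Module ℤ[G] Cc]
  (d1 : A →ₗ[ℤ[G]] B) (dn : B →ₗ[ℤ[G]] Cc)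
  (ηn : (Fin r →₀ ℤ[G]) →ₗ[ℤ[G]] B) (η1 : (Fin s →₀ ℤ[G]) →ₗ[ℤ[G]] A)

theorem bdryNorm_le_FVfun {k : ℕ} {γ : B} (hγ : γ ∈ LinearMap.ker dn) (hk : fillNorm ηn γ ≤ k) :
    (bdryNorm d1 η1 γ : ℕ∞) ≤ FVfun d1 dn ηn η1 k :=
  le_sSup ⟨γ, hγ, hk, rfl⟩

theorem FVfun_le {k : ℕ} {c : ℕ∞}
    (h : ∀ γ ∈ LinearMap.ker dn, fillNorm ηn γ ≤ k → (bdryNorm d1 η1 γ : ℕ∞) ≤ c) :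
    FVfun d1 dn ηn η1 k ≤ c :=
  sSup_le fun _ ⟨γ, hγ, hk, hc⟩ => hc ▸ h γ hγ hk

theorem FVfun_monotone : Monotone (FVfun d1 dn ηn η1) :=
  fun _ _ hkk' => sSup_le_sSup fun _ ⟨γ, hγ, hk, hc⟩ => ⟨γ, hγ, hk.trans (by exact_mod_cast hkk'), hc⟩

end FillingNorms

theorem FPreceq.of_le {f g : ℕ → ℕ∞} (hg : Monotone g) (a b c : ℕ)
    (h : ∀ k, f k ≤ a * g (b * k) + c * k) : FPreceq f g := by
  refine ⟨a + b + c + 1, by omega, fun k => (h k).trans ?_⟩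
  have hb : b * k ≤ (a + b + c + 1) * k + (a + b + c + 1) := by nlinarith
  calc (a : ℕ∞) * g (b * k) + c * k
      ≤ (a + b + c + 1 : ℕ) * g ((a + b + c + 1) * k + (a + b + c + 1)) +
          (a + b + c + 1 : ℕ) * k := by
        gcongr
        · exact_mod_cast (by omega : a ≤ a + b + c + 1)
        · exact hg hb
        · exact_mod_cast (by omega : c ≤ a + b + c + 1)
    _ ≤ _ := le_self_add

section Comparison

variable {R : Type*} [Ring R]

theorem LinearMap.exists_comp_eq_of_range_le {Q A B : Type*} [AddCommGroup Q] [Module R Q]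
    [Module.Projective R Q] [AddCommGroup A] [Module R A] [AddCommGroup B] [Module R B]
    (d : A →ₗ[R] B) (φ : Q →ₗ[R] B) (h : LinearMap.range φ ≤ LinearMap.range d) :
    ∃ ψ : Q →ₗ[R] A, d ∘ₗ ψ = φ := by
  obtain ⟨ψ, hψ⟩ := Module.projective_lifting_property d.rangeRestrict
    (φ.codRestrict (LinearMap.range d) fun q => h ⟨q, rfl⟩) d.surjective_rangeRestrict
  exact ⟨ψ, LinearMap.ext fun q => congr_arg Subtype.val congr($hψ q)⟩

variable {F₂ F₁ F₀ P₂ P₁ P₀ : Type*}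
  [AddCommGroup F₂] [Module R F₂] [AddCommGroup F₁] [Module R F₁] [AddCommGroup F₀] [Module R F₀]
  [AddCommGroup P₂] [Module R P₂] [AddCommGroup P₁] [Module R P₁] [AddCommGroup P₀] [Module R P₀]
  {dF₁ : F₂ →ₗ[R] F₁} {dF₀ : F₁ →ₗ[R] F₀} {dP₁ : P₂ →ₗ[R] P₁} {dP₀ : P₁ →ₗ[R] P₀}

theorem exists_chainMap_succ [Module.Projective R F₂] (hF : dF₀ ∘ₗ dF₁ = 0)
    (hP : LinearMap.ker dP₀ ≤ LinearMap.range dP₁) {f₁ : F₁ →ₗ[R] P₁} {f₀ : F₀ →ₗ[R] P₀}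
    (hf : dP₀ ∘ₗ f₁ = f₀ ∘ₗ dF₀) : ∃ f₂ : F₂ →ₗ[R] P₂, dP₁ ∘ₗ f₂ = f₁ ∘ₗ dF₁ := by
  refine dP₁.exists_comp_eq_of_range_le _ ?_
  rintro _ ⟨q, rfl⟩
  refine hP ?_
  rw [LinearMap.mem_ker, LinearMap.comp_apply, ← LinearMap.comp_apply dP₀, hf]
  simp [← LinearMap.comp_apply dF₀, hF]

theorem exists_homotopy_succ [Module.Projective R F₁] (hF : dF₀ ∘ₗ dF₁ = 0)
    (hP : LinearMap.ker dP₀ ≤ LinearMap.range dP₁) {φ₁ : F₁ →ₗ[R] P₁} {φ₀ : F₀ →ₗ[R] P₀}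
    (hφ : dP₀ ∘ₗ φ₁ = φ₀ ∘ₗ dF₀) {h₀ : F₀ →ₗ[R] P₁} (hh : dP₀ ∘ₗ h₀ ∘ₗ dF₀ = φ₀ ∘ₗ dF₀) :
    ∃ h₁ : F₁ →ₗ[R] P₂, dP₁ ∘ₗ h₁ ∘ₗ dF₁ = φ₁ ∘ₗ dF₁ := by
  obtain ⟨h₁, hh₁⟩ : ∃ h₁ : F₁ →ₗ[R] P₂, dP₁ ∘ₗ h₁ = φ₁ - h₀ ∘ₗ dF₀ := by
    refine dP₁.exists_comp_eq_of_range_le _ ?_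
    rintro _ ⟨q, rfl⟩
    refine hP ?_
    rw [LinearMap.mem_ker, LinearMap.sub_apply, map_sub, ← LinearMap.comp_apply dP₀, hφ,
      ← LinearMap.comp_apply dP₀, hh, sub_self]
  refine ⟨h₁, ?_⟩
  rw [← LinearMap.comp_assoc, hh₁, LinearMap.sub_comp, LinearMap.comp_assoc, hF,
    LinearMap.comp_zero, sub_zero]

theorem comp_id_sub_comp_of_comm {A₁ A₀ B₁ B₀ : Type*} [AddCommGroup A₁] [Module R A₁]
    [AddCommGroup A₀] [Module R A₀] [AddCommGroup B₁] [Module R B₁] [AddCommGroup B₀] [Module R B₀]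
    {dA : A₁ →ₗ[R] A₀} {dB : B₁ →ₗ[R] B₀} {f₁ : A₁ →ₗ[R] B₁} {f₀ : A₀ →ₗ[R] B₀}
    {g₁ : B₁ →ₗ[R] A₁} {g₀ : B₀ →ₗ[R] A₀} (hf : dB ∘ₗ f₁ = f₀ ∘ₗ dA) (hg : dA ∘ₗ g₁ = g₀ ∘ₗ dB) :
    dA ∘ₗ (LinearMap.id - g₁ ∘ₗ f₁) = (LinearMap.id - g₀ ∘ₗ f₀) ∘ₗ dA := by
  rw [LinearMap.comp_sub, LinearMap.sub_comp, ← LinearMap.comp_assoc, hg, LinearMap.comp_assoc, hf,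
    LinearMap.comp_id, LinearMap.id_comp, LinearMap.comp_assoc]

end Comparison

section Resolutions

variable {R : Type*} [Ring R] {m : ℕ} {F P : ℕ → Type*} {Z : Type*}
  [∀ i, AddCommGroup (F i)] [∀ i, Module R (F i)] [∀ i, AddCommGroup (P i)] [∀ i, Module R (P i)]
  [AddCommGroup Z] [Module R Z]
  {dF : ∀ i, F (i + 1) →ₗ[R] F i} {dP : ∀ i, P (i + 1) →ₗ[R] P i}
  {εF : F 0 →ₗ[R] Z} {εP : P 0 →ₗ[R] Z}

/-- The homotopy identity for `h` is only recorded on boundaries, where it does not involve the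
homotopy in the previous degree; this is all that the induction and the filling estimate need. -/
theorem exists_comparison_maps
    (hFproj : ∀ i ≤ m + 2, Module.Projective R (F i))
    (hPproj : ∀ i ≤ m + 2, Module.Projective R (P i))
    (hεF : Function.Surjective εF) (hF0 : LinearMap.range (dF 0) = LinearMap.ker εF)
    (hFex : ∀ i, i + 1 ≤ m + 1 → LinearMap.range (dF (i + 1)) = LinearMap.ker (dF i))
    (hεP : Function.Surjective εP) (hP0 : LinearMap.range (dP 0) = LinearMap.ker εP)
    (hPex : ∀ i, i + 1 ≤ m + 1 → LinearMap.range (dP (i + 1)) = LinearMap.ker (dP i)) :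
    ∀ N ≤ m + 1, ∃ (f : F N →ₗ[R] P N) (f' : F (N + 1) →ₗ[R] P (N + 1))
      (g : P N →ₗ[R] F N) (g' : P (N + 1) →ₗ[R] F (N + 1)) (h : F N →ₗ[R] F (N + 1)),
      dP N ∘ₗ f' = f ∘ₗ dF N ∧ dF N ∘ₗ g' = g ∘ₗ dP N ∧
      dF N ∘ₗ h ∘ₗ dF N = (LinearMap.id - g ∘ₗ f) ∘ₗ dF N := by
  intro N hN
  induction N with
  | zero =>
    have := hFproj 0 (by omega)
    have := hFproj 1 (by omega)
    have := hPproj 0 (by omega)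
    have := hPproj 1 (by omega)
    obtain ⟨f, hf⟩ := Module.projective_lifting_property εP εF hεP
    obtain ⟨g, hg⟩ := Module.projective_lifting_property εF εP hεF
    obtain ⟨f', hf'⟩ := exists_chainMap_succ (LinearMap.range_le_ker_iff.mp hF0.le) hP0.ge
      (hf.trans (LinearMap.id_comp εF).symm)
    obtain ⟨g', hg'⟩ := exists_chainMap_succ (LinearMap.range_le_ker_iff.mp hP0.le) hF0.ge
      (hg.trans (LinearMap.id_comp εP).symm)
    obtain ⟨h, hh⟩ := exists_homotopy_succ (h₀ := 0) (φ₀ := 0)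
      (LinearMap.range_le_ker_iff.mp hF0.le) hF0.ge (φ₁ := LinearMap.id - g ∘ₗ f)
      (by rw [LinearMap.comp_sub, ← LinearMap.comp_assoc, hg, hf]; simp)
      (by simp)
    exact ⟨f, f', g, g', h, hf', hg', hh⟩
  | succ N ih =>
    obtain ⟨f, f', g, g', h, hf, hg, hh⟩ := ih (by omega)
    have := hFproj (N + 1) (by omega)
    have := hFproj (N + 2) (by omega)
    have := hPproj (N + 2) (by omega)
    have hFN := hFex N (by omega)
    have hPN := hPex N (by omega)
    obtain ⟨f'', hf''⟩ := exists_chainMap_succ (LinearMap.range_le_ker_iff.mp hFN.le) hPN.ge hf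
    obtain ⟨g'', hg''⟩ := exists_chainMap_succ (LinearMap.range_le_ker_iff.mp hPN.le) hFN.ge hg
    obtain ⟨h', hh'⟩ := exists_homotopy_succ (LinearMap.range_le_ker_iff.mp hFN.le) hFN.ge
      (comp_id_sub_comp_of_comm hf hg) hh
    exact ⟨f', f'', g', g'', h', hf'', hg'', hh'⟩

end Resolutions

section FillingFunctions

variable {G : Type*} [Group G]

theorem FVfun_preceq_of_homotopy {F₂ F₁ F₀ P₂ P₁ P₀ : Type*}
    [AddCommGroup F₂] [Module ℤ[G] F₂] [AddCommGroup F₁] [Module ℤ[G] F₁]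
    [AddCommGroup F₀] [Module ℤ[G] F₀] [AddCommGroup P₂] [Module ℤ[G] P₂]
    [AddCommGroup P₁] [Module ℤ[G] P₁] [AddCommGroup P₀] [Module ℤ[G] P₀]
    {dF₁ : F₂ →ₗ[ℤ[G]] F₁} {dF₀ : F₁ →ₗ[ℤ[G]] F₀} {dP₁ : P₂ →ₗ[ℤ[G]] P₁} {dP₀ : P₁ →ₗ[ℤ[G]] P₀}
    (hP : LinearMap.ker dP₀ ≤ LinearMap.range dP₁)
    {f : F₁ →ₗ[ℤ[G]] P₁} {g₁ : P₁ →ₗ[ℤ[G]] F₁} {g₂ : P₂ →ₗ[ℤ[G]] F₂} {h : F₁ →ₗ[ℤ[G]] F₂}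
    (hf : ∀ γ ∈ LinearMap.ker dF₀, f γ ∈ LinearMap.ker dP₀) (hg : dF₁ ∘ₗ g₂ = g₁ ∘ₗ dP₁)
    (hh : ∀ γ ∈ LinearMap.ker dF₀, dF₁ (h γ) = γ - g₁ (f γ))
    {rF₁ rF₂ rP₁ rP₂ : ℕ}
    {ηF₁ : (Fin rF₁ →₀ ℤ[G]) →ₗ[ℤ[G]] F₁} (hηF₁ : Function.Surjective ηF₁)
    {ηF₂ : (Fin rF₂ →₀ ℤ[G]) →ₗ[ℤ[G]] F₂} (hηF₂ : Function.Surjective ηF₂)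
    {ηP₁ : (Fin rP₁ →₀ ℤ[G]) →ₗ[ℤ[G]] P₁} (hηP₁ : Function.Surjective ηP₁)
    {ηP₂ : (Fin rP₂ →₀ ℤ[G]) →ₗ[ℤ[G]] P₂} (hηP₂ : Function.Surjective ηP₂) :
    FPreceq (FVfun dF₁ dF₀ ηF₁ ηF₂) (FVfun dP₁ dP₀ ηP₁ ηP₂) := by
  obtain ⟨C₁, hC₁⟩ := exists_fillNorm_map_le hηF₁ hηP₁ f
  obtain ⟨C₂, hC₂⟩ := exists_fillNorm_map_le hηP₂ hηF₂ g₂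
  obtain ⟨C₃, hC₃⟩ := exists_fillNorm_map_le hηF₁ hηF₂ h
  refine FPreceq.of_le (FVfun_monotone _ _ _ _) C₂ C₁ C₃ fun k =>
    FVfun_le _ _ _ _ fun γ hγ hk => ?_
  obtain ⟨ν, hν, hν_norm⟩ := exists_fillNorm_eq_bdryNorm dP₁ ηP₂ (hP (hf γ hγ))
  have hfill : dF₁ (g₂ ν + h γ) = γ := by
    rw [map_add, ← LinearMap.comp_apply, hg, LinearMap.comp_apply, hν, hh γ hγ, add_sub_cancel]
  have hbound : bdryNorm dF₁ ηF₂ γ ≤ C₂ * bdryNorm dP₁ ηP₂ (f γ) + C₃ * k :=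
    calc bdryNorm dF₁ ηF₂ γ ≤ fillNorm ηF₂ (g₂ ν + h γ) := bdryNorm_le_fillNorm _ _ hfill
      _ ≤ fillNorm ηF₂ (g₂ ν) + fillNorm ηF₂ (h γ) := fillNorm_add_le hηF₂ _ _
      _ ≤ C₂ * fillNorm ηP₂ ν + C₃ * fillNorm ηF₁ γ := add_le_add (hC₂ ν) (hC₃ γ)
      _ ≤ C₂ * bdryNorm dP₁ ηP₂ (f γ) + C₃ * k := by rw [hν_norm]; gcongr
  have hFV : (bdryNorm dP₁ ηP₂ (f γ) : ℕ∞) ≤ FVfun dP₁ dP₀ ηP₁ ηP₂ (C₁ * k) :=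
    bdryNorm_le_FVfun _ _ _ _ (hf γ hγ) ((hC₁ γ).trans (Nat.mul_le_mul_left _ hk))
  calc (bdryNorm dF₁ ηF₂ γ : ℕ∞) ≤ C₂ * (bdryNorm dP₁ ηP₂ (f γ) : ℕ∞) + C₃ * k := by
        exact_mod_cast hbound
    _ ≤ C₂ * FVfun dP₁ dP₀ ηP₁ ηP₂ (C₁ * k) + C₃ * k := by gcongr

theorem FVfun_preceq_of_resolutions {m : ℕ} {F P : ℕ → Type*} {Z : Type*}
    [∀ i, AddCommGroup (F i)] [∀ i, Module ℤ[G] (F i)]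
    [∀ i, AddCommGroup (P i)] [∀ i, Module ℤ[G] (P i)] [AddCommGroup Z] [Module ℤ[G] Z]
    {dF : ∀ i, F (i + 1) →ₗ[ℤ[G]] F i} {dP : ∀ i, P (i + 1) →ₗ[ℤ[G]] P i}
    {εF : F 0 →ₗ[ℤ[G]] Z} {εP : P 0 →ₗ[ℤ[G]] Z}
    (hFproj : ∀ i ≤ m + 2, Module.Projective ℤ[G] (F i))
    (hPproj : ∀ i ≤ m + 2, Module.Projective ℤ[G] (P i))
    (hεF : Function.Surjective εF) (hF0 : LinearMap.range (dF 0) = LinearMap.ker εF)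
    (hFex : ∀ i, i + 1 ≤ m + 1 → LinearMap.range (dF (i + 1)) = LinearMap.ker (dF i))
    (hεP : Function.Surjective εP) (hP0 : LinearMap.range (dP 0) = LinearMap.ker εP)
    (hPex : ∀ i, i + 1 ≤ m + 1 → LinearMap.range (dP (i + 1)) = LinearMap.ker (dP i))
    {rFn rFn1 rPn rPn1 : ℕ}
    {ηFn : (Fin rFn →₀ ℤ[G]) →ₗ[ℤ[G]] F (m + 1)} (hηFn : Function.Surjective ηFn)
    {ηFn1 : (Fin rFn1 →₀ ℤ[G]) →ₗ[ℤ[G]] F (m + 2)} (hηFn1 : Function.Surjective ηFn1)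
    {ηPn : (Fin rPn →₀ ℤ[G]) →ₗ[ℤ[G]] P (m + 1)} (hηPn : Function.Surjective ηPn)
    {ηPn1 : (Fin rPn1 →₀ ℤ[G]) →ₗ[ℤ[G]] P (m + 2)} (hηPn1 : Function.Surjective ηPn1) :
    FPreceq (FVfun (dF (m + 1)) (dF m) ηFn ηFn1) (FVfun (dP (m + 1)) (dP m) ηPn ηPn1) := by
  obtain ⟨f, f', g, g', h, hf, hg, hh⟩ :=
    exists_comparison_maps hFproj hPproj hεF hF0 hFex hεP hP0 hPex (m + 1) le_rfl
  have hFm := hFex m le_rfl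
  have hPm := hPex m le_rfl
  refine FVfun_preceq_of_homotopy hPm.ge (f := f) (h := h) ?_ hg ?_ hηFn hηFn1 hηPn hηPn1
  · intro γ hγ
    obtain ⟨q, rfl⟩ := hFm.ge hγ
    rw [← LinearMap.comp_apply, ← hf]
    exact hPm.le ⟨f' q, rfl⟩
  · intro γ hγ
    obtain ⟨q, rfl⟩ := hFm.ge hγ
    simpa using congr($hh q)

end FillingFunctions

theorem algebraic_filling_function_well_defined_general
    (G : Type*) [Group G] (m : ℕ)
    (F P : ℕ → Type*)
    [∀ i, AddCommGroup (F i)] [∀ i, Module (MonoidAlgebra ℤ G) (F i)]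
    [∀ i, AddCommGroup (P i)] [∀ i, Module (MonoidAlgebra ℤ G) (P i)]
    (dF : ∀ i, F (i + 1) →ₗ[MonoidAlgebra ℤ G] F i)
    (dP : ∀ i, P (i + 1) →ₗ[MonoidAlgebra ℤ G] P i)
    (εF : F 0 →ₗ[MonoidAlgebra ℤ G] TrivialZ G)
    (εP : P 0 →ₗ[MonoidAlgebra ℤ G] TrivialZ G)
    -- each module in degrees 0, …, n+1 = m+2 is finitely generated projective
    (hFproj : ∀ i ≤ m + 2, Module.Projective (MonoidAlgebra ℤ G) (F i))
    (hPproj : ∀ i ≤ m + 2, Module.Projective (MonoidAlgebra ℤ G) (P i))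
    -- exactness of (F_*, ∂_*) at ℤ and at F_0, …, F_n
    (hεF : Function.Surjective εF)
    (hF0 : LinearMap.range (dF 0) = LinearMap.ker εF)
    (hFex : ∀ i, i + 1 ≤ m + 1 →
      LinearMap.range (dF (i + 1)) = LinearMap.ker (dF i))
    -- exactness of (P_*, δ_*) at ℤ and at P_0, …, P_n
    (hεP : Function.Surjective εP)
    (hP0 : LinearMap.range (dP 0) = LinearMap.ker εP)
    (hPex : ∀ i, i + 1 ≤ m + 1 →
      LinearMap.range (dP (i + 1)) = LinearMap.ker (dP i))
    -- chosen filling norms on the degree-n and degree-(n+1) modules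
    (rFn rFn1 rPn rPn1 : ℕ)
    (ηFn : (Fin rFn →₀ MonoidAlgebra ℤ G) →ₗ[MonoidAlgebra ℤ G] F (m + 1))
    (hηFn : Function.Surjective ηFn)
    (ηFn1 : (Fin rFn1 →₀ MonoidAlgebra ℤ G) →ₗ[MonoidAlgebra ℤ G] F (m + 2))
    (hηFn1 : Function.Surjective ηFn1)
    (ηPn : (Fin rPn →₀ MonoidAlgebra ℤ G) →ₗ[MonoidAlgebra ℤ G] P (m + 1))
    (hηPn : Function.Surjective ηPn)
    (ηPn1 : (Fin rPn1 →₀ MonoidAlgebra ℤ G) →ₗ[MonoidAlgebra ℤ G] P (m + 2))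
    (hηPn1 : Function.Surjective ηPn1) :
    FPreceq (FVfun (dF (m + 1)) (dF m) ηFn ηFn1)
        (FVfun (dP (m + 1)) (dP m) ηPn ηPn1) ∧
    FPreceq (FVfun (dP (m + 1)) (dP m) ηPn ηPn1)
        (FVfun (dF (m + 1)) (dF m) ηFn ηFn1) :=
  ⟨FVfun_preceq_of_resolutions hFproj hPproj hεF hF0 hFex hεP hP0 hPex hηFn hηFn1 hηPn hηPn1,
    FVfun_preceq_of_resolutions hPproj hFproj hεP hP0 hPex hεF hF0 hFex hηPn hηPn1 hηFn hηFn1⟩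

/-- Well-definedness of the algebraic homological filling function: the filling
functions of any two `FP_{n+1}`-resolutions `(F_*, ∂_*)` and `(P_*, δ_*)` of `ℤ`
over `ℤ[G]` (with `n = m + 1 ≥ 1`), computed with respect to any chosen filling
norms on the degree-`n` and degree-`(n+1)` modules, are linearly equivalent. -/
theorem algebraic_filling_function_well_defined
    (G : Type*) [Group G] (m : ℕ)
    (F P : ℕ → Type*)
    [∀ i, AddCommGroup (F i)] [∀ i, Module (MonoidAlgebra ℤ G) (F i)]
    [∀ i, AddCommGroup (P i)] [∀ i, Module (MonoidAlgebra ℤ G) (P i)]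
    (dF : ∀ i, F (i + 1) →ₗ[MonoidAlgebra ℤ G] F i)
    (dP : ∀ i, P (i + 1) →ₗ[MonoidAlgebra ℤ G] P i)
    (εF : F 0 →ₗ[MonoidAlgebra ℤ G] TrivialZ G)
    (εP : P 0 →ₗ[MonoidAlgebra ℤ G] TrivialZ G)
    -- each module in degrees 0, …, n+1 = m+2 is finitely generated projective
    (hFproj : ∀ i ≤ m + 2, Module.Projective (MonoidAlgebra ℤ G) (F i))
    (hFfin : ∀ i ≤ m + 2, Module.Finite (MonoidAlgebra ℤ G) (F i))
    (hPproj : ∀ i ≤ m + 2, Module.Projective (MonoidAlgebra ℤ G) (P i))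
    (hPfin : ∀ i ≤ m + 2, Module.Finite (MonoidAlgebra ℤ G) (P i))
    -- exactness of (F_*, ∂_*) at ℤ and at F_0, …, F_n
    (hεF : Function.Surjective εF)
    (hF0 : LinearMap.range (dF 0) = LinearMap.ker εF)
    (hFex : ∀ i, i + 1 ≤ m + 1 →
      LinearMap.range (dF (i + 1)) = LinearMap.ker (dF i))
    -- exactness of (P_*, δ_*) at ℤ and at P_0, …, P_n
    (hεP : Function.Surjective εP)
    (hP0 : LinearMap.range (dP 0) = LinearMap.ker εP)
    (hPex : ∀ i, i + 1 ≤ m + 1 →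
      LinearMap.range (dP (i + 1)) = LinearMap.ker (dP i))
    -- chosen filling norms on the degree-n and degree-(n+1) modules
    (rFn rFn1 rPn rPn1 : ℕ)
    (ηFn : (Fin rFn →₀ MonoidAlgebra ℤ G) →ₗ[MonoidAlgebra ℤ G] F (m + 1))
    (hηFn : Function.Surjective ηFn)
    (ηFn1 : (Fin rFn1 →₀ MonoidAlgebra ℤ G) →ₗ[MonoidAlgebra ℤ G] F (m + 2))
    (hηFn1 : Function.Surjective ηFn1)
    (ηPn : (Fin rPn →₀ MonoidAlgebra ℤ G) →ₗ[MonoidAlgebra ℤ G] P (m + 1))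
    (hηPn : Function.Surjective ηPn)
    (ηPn1 : (Fin rPn1 →₀ MonoidAlgebra ℤ G) →ₗ[MonoidAlgebra ℤ G] P (m + 2))
    (hηPn1 : Function.Surjective ηPn1) :
    FPreceq (FVfun (dF (m + 1)) (dF m) ηFn ηFn1)
        (FVfun (dP (m + 1)) (dP m) ηPn ηPn1) ∧
    FPreceq (FVfun (dP (m + 1)) (dP m) ηPn ηPn1)
        (FVfun (dF (m + 1)) (dF m) ηFn ηFn1) :=
  algebraic_filling_function_well_defined_general G m F P dF dP εF εP hFproj hPproj hεF hF0 hFex hεP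
    hP0 hPex rFn rFn1 rPn rPn1 ηFn hηFn ηFn1 hηFn1 ηPn hηPn ηPn1 hηPn1
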